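/- Soundness of the rule IC: for every set of propositional formulas Γ and all finite Λ, Λ', Θ ⊆ Ω with Λ ∪ Λ' nonempty, if Γ ⊢_CLuN Dab(Λ ∪ Λ') ∨ Dab(Θ ∪ Λ') then Γ ⊢_CLuN Dab(Λ ∪ Λ') ∨ Dab(Θ); in particular, if Γ ⊢_CLuN Dab(Λ ∪ Λ') ∨ Dab(Λ') then Γ ⊢_CLuN Dab(Λ ∪ Λ'). -/

import Mathlib

/-- Propositional formulas: variables, ⊥, ⊃, ∧, ∨, ≡, and paraconsistent negation ~. -/
inductive Formula : Type
  | var : ℕ → Formula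
  | bot : Formula
  | imp : Formula → Formula → Formula
  | conj : Formula → Formula → Formula
  | disj : Formula → Formula → Formula
  | equiv : Formula → Formula → Formula
  | pneg : Formula → Formula
  deriving DecidableEq

namespace Formula

/-- Classical negation: ¬A := A ⊃ ⊥. -/
def neg (A : Formula) : Formula := imp A bot

end Formula

/-- Hilbert-style derivability. `cl = false` gives CLuN (full positive classical logic,
including Peirce's law, plus ⊥ ⊃ A and A ∨ ~A, with modus ponens as only rule);
`cl = true` additionally has the axiom schema (A ∧ ~A) ⊃ B, giving CL. -/
inductive Deriv (cl : Bool) (Γ : Set Formula) : Formula → Prop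
  | prem {A : Formula} : A ∈ Γ → Deriv cl Γ A
  | axK (A B : Formula) : Deriv cl Γ (A.imp (B.imp A))
  | axS (A B C : Formula) : Deriv cl Γ ((A.imp (B.imp C)).imp ((A.imp B).imp (A.imp C)))
  | axPeirce (A B : Formula) : Deriv cl Γ (((A.imp B).imp A).imp A)
  | axAndElimL (A B : Formula) : Deriv cl Γ ((A.conj B).imp A)
  | axAndElimR (A B : Formula) : Deriv cl Γ ((A.conj B).imp B)
  | axAndIntro (A B : Formula) : Deriv cl Γ (A.imp (B.imp (A.conj B)))
  | axOrIntroL (A B : Formula) : Deriv cl Γ (A.imp (A.disj B))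
  | axOrIntroR (A B : Formula) : Deriv cl Γ (B.imp (A.disj B))
  | axOrElim (A B C : Formula) : Deriv cl Γ ((A.imp C).imp ((B.imp C).imp ((A.disj B).imp C)))
  | axIffElimL (A B : Formula) : Deriv cl Γ ((A.equiv B).imp (A.imp B))
  | axIffElimR (A B : Formula) : Deriv cl Γ ((A.equiv B).imp (B.imp A))
  | axIffIntro (A B : Formula) : Deriv cl Γ ((A.imp B).imp ((B.imp A).imp (A.equiv B)))
  | axBot (A : Formula) : Deriv cl Γ (Formula.bot.imp A)
  | axEM (A : Formula) : Deriv cl Γ (A.disj A.pneg)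
  | axCL (A B : Formula) : cl = true → Deriv cl Γ ((A.conj A.pneg).imp B)
  | mp {A B : Formula} : Deriv cl Γ (A.imp B) → Deriv cl Γ A → Deriv cl Γ B

/-- Γ ⊢_CLuN A -/
def CLuN (Γ : Set Formula) (A : Formula) : Prop := Deriv false Γ A

/-- Γ ⊢_CL A -/
def CL (Γ : Set Formula) (A : Formula) : Prop := Deriv true Γ A

/-- The set of abnormalities Ω: all formulas of the form A ∧ ~A. -/
def Omega : Set Formula := {F | ∃ A : Formula, F = A.conj A.pneg}

/-- An arbitrary (noncomputable) linear order on formulas, used only to pick a canonical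
ordering of the disjuncts of a Dab-formula. -/
noncomputable instance : LinearOrder Formula :=
  @linearOrderOfSTO Formula WellOrderingRel _ (Classical.decRel _)

/-- Disjunction of a list of formulas; the empty disjunction is ⊥. -/
def listDisj : List Formula → Formula
  | [] => Formula.bot
  | [A] => A
  | A :: B :: rest => A.disj (listDisj (B :: rest))

/-- Dab(Δ): the disjunction of the members of the finite set Δ (by convention Dab(∅) := ⊥). -/
noncomputable def Dab (Δ : Finset Formula) : Formula := listDisj (Δ.sort (· ≤ ·))

/-- Dab(Δ) is a minimal Dab-consequence of Γ: Δ is finite and nonempty, Δ ⊆ Ω,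
Γ ⊢_CLuN Dab(Δ), and no nonempty Δ' ⊊ Δ has Γ ⊢_CLuN Dab(Δ'). -/
def MinDabConsequence (Γ : Set Formula) (Δ : Finset Formula) : Prop :=
  Δ.Nonempty ∧ ↑Δ ⊆ Omega ∧ CLuN Γ (Dab Δ) ∧
    ∀ Δ' : Finset Formula, Δ'.Nonempty → Δ' ⊂ Δ → ¬ CLuN Γ (Dab Δ')

/-- U(Γ): the set of formulas unreliable with respect to Γ. -/
def U (Γ : Set Formula) : Set Formula :=
  {A | ∃ Δ : Finset Formula, MinDabConsequence Γ Δ ∧ A ∈ Δ}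

/-! Each disjunct of Dab(Θ ∪ Λ') is a disjunct of Dab(Λ ∪ Λ') or of Dab(Θ), so positive logic
turns the first disjunction into the second; the special case is Θ = ∅, where Dab(∅) = ⊥. -/

theorem dab_empty : Dab ∅ = Formula.bot := by
  simp [Dab, listDisj]

namespace Deriv

variable {cl : Bool} {Γ : Set Formula}

theorem imp_self (A : Formula) : Deriv cl Γ (A.imp A) :=
  mp (mp (axS A (A.imp A) A) (axK A (A.imp A))) (axK A A)

theorem imp_trans {A B C : Formula} (hAB : Deriv cl Γ (A.imp B)) (hBC : Deriv cl Γ (B.imp C)) :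
    Deriv cl Γ (A.imp C) :=
  mp (mp (axS A B C) (mp (axK (B.imp C) A) hBC)) hAB

theorem disj_imp {A B C : Formula} (hA : Deriv cl Γ (A.imp C)) (hB : Deriv cl Γ (B.imp C)) :
    Deriv cl Γ ((A.disj B).imp C) :=
  mp (mp (axOrElim A B C) hA) hB

theorem of_disj_bot {A : Formula} (h : Deriv cl Γ (A.disj Formula.bot)) : Deriv cl Γ A :=
  mp (disj_imp (imp_self A) (axBot A)) h

theorem listDisj_imp {C : Formula} :
    ∀ {l : List Formula}, (∀ A ∈ l, Deriv cl Γ (A.imp C)) → Deriv cl Γ ((listDisj l).imp C)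
  | [], _ => axBot C
  | [A], h => h A (List.mem_singleton_self A)
  | A :: _ :: _, h =>
    disj_imp (h A List.mem_cons_self) (listDisj_imp fun X hX => h X (List.mem_cons_of_mem A hX))

theorem imp_listDisj_of_mem {A : Formula} :
    ∀ {l : List Formula}, A ∈ l → Deriv cl Γ (A.imp (listDisj l))
  | [B], h => by
    obtain rfl := List.mem_singleton.mp h
    exact imp_self A
  | B :: C :: rest, h => by
    rcases List.mem_cons.mp h with rfl | h
    · exact axOrIntroL A (listDisj (C :: rest))
    · exact imp_trans (imp_listDisj_of_mem h) (axOrIntroR B (listDisj (C :: rest)))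

theorem dab_imp {Δ : Finset Formula} {C : Formula} (h : ∀ A ∈ Δ, Deriv cl Γ (A.imp C)) :
    Deriv cl Γ ((Dab Δ).imp C) :=
  listDisj_imp fun A hA => h A ((Finset.mem_sort _).mp hA)

theorem imp_dab_of_mem {Δ : Finset Formula} {A : Formula} (h : A ∈ Δ) :
    Deriv cl Γ (A.imp (Dab Δ)) :=
  imp_listDisj_of_mem ((Finset.mem_sort _).mpr h)

theorem dab_union_imp_disj {Δ Θ Λ' : Finset Formula} (hΛ' : Λ' ⊆ Δ) :
    Deriv cl Γ ((Dab (Θ ∪ Λ')).imp ((Dab Δ).disj (Dab Θ))) :=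
  dab_imp fun _ hA => (Finset.mem_union.mp hA).elim
    (fun hAΘ => imp_trans (imp_dab_of_mem hAΘ) (axOrIntroR _ _))
    (fun hAΛ' => imp_trans (imp_dab_of_mem (hΛ' hAΛ')) (axOrIntroL _ _))

theorem disj_dab_of_disj_dab_union {Δ Θ Λ' : Finset Formula} (hΛ' : Λ' ⊆ Δ)
    (h : Deriv cl Γ ((Dab Δ).disj (Dab (Θ ∪ Λ')))) : Deriv cl Γ ((Dab Δ).disj (Dab Θ)) :=
  mp (disj_imp (axOrIntroL _ _) (dab_union_imp_disj hΛ')) h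

end Deriv

theorem ic_sound_general (Γ : Set Formula) (Λ Λ' Θ : Finset Formula) :
    (CLuN Γ ((Dab (Λ ∪ Λ')).disj (Dab (Θ ∪ Λ'))) →
      CLuN Γ ((Dab (Λ ∪ Λ')).disj (Dab Θ))) ∧
    (CLuN Γ ((Dab (Λ ∪ Λ')).disj (Dab Λ')) → CLuN Γ (Dab (Λ ∪ Λ'))) := by
  refine ⟨Deriv.disj_dab_of_disj_dab_union Finset.subset_union_right, fun h => ?_⟩
  have h' := Deriv.disj_dab_of_disj_dab_union (Δ := Λ ∪ Λ') (Θ := ∅)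
    Finset.subset_union_right (by rwa [Finset.empty_union])
  rw [dab_empty] at h'
  exact Deriv.of_disj_bot h'

/-- Soundness of IC: if Γ ⊢_CLuN Dab(Λ ∪ Λ') ∨ Dab(Θ ∪ Λ') then
Γ ⊢_CLuN Dab(Λ ∪ Λ') ∨ Dab(Θ); in particular, if Γ ⊢_CLuN Dab(Λ ∪ Λ') ∨ Dab(Λ') then
Γ ⊢_CLuN Dab(Λ ∪ Λ'). -/
theorem ic_sound (Γ : Set Formula) (Λ Λ' Θ : Finset Formula)
    (hΛ : ↑Λ ⊆ Omega) (hΛ' : ↑Λ' ⊆ Omega) (hΘ : ↑Θ ⊆ Omega)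
    (hne : (Λ ∪ Λ').Nonempty) :
    (CLuN Γ ((Dab (Λ ∪ Λ')).disj (Dab (Θ ∪ Λ'))) →
      CLuN Γ ((Dab (Λ ∪ Λ')).disj (Dab Θ))) ∧
    (CLuN Γ ((Dab (Λ ∪ Λ')).disj (Dab Λ')) → CLuN Γ (Dab (Λ ∪ Λ'))) :=
  ic_sound_general Γ Λ Λ' Θ
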